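/- arXiv:2307.03518 — 8 statements merged into one kernel-verified Lean document; each statement's English description precedes it below -/
import Mathlib

section
/- An instance of Knapsack (N, c, d, B, D) is a yes-instance if and only if the constructed instance of NAP on a star tree is a yes-instance, where the star has center w, leaves N, edge weights λ((w,x_i)) = d(x_i), and each leaf x_i has two projects (cost 0, probability 0) and (cost c(x_i), probability 1), with budget B and diversity threshold D. -/
theorem Finset.exists_filter_iff_exists_subset {ι : Type*} (N : Finset ι) (P : Finset ι → Prop) :
    (∃ σ : ι → Bool, P (N.filter (σ ·))) ↔ ∃ N' ⊆ N, P N' := by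
  classical
  refine ⟨fun ⟨σ, hσ⟩ => ⟨_, N.filter_subset _, hσ⟩, fun ⟨N', hN', hP⟩ => ⟨(decide <| · ∈ N'), ?_⟩⟩
  simpa [Finset.filter_mem_eq_inter, Finset.inter_eq_right.mpr hN'] using hP

theorem stmt_3_general {ι : Type*} (N : Finset ι) (c d : ι → ℕ) (B D : ℕ) :
    (∃ N' ⊆ N, (∑ x ∈ N', c x) ≤ B ∧ D ≤ ∑ x ∈ N', d x) ↔
    (∃ σ : ι → Bool, (∑ x ∈ N, if σ x then c x else 0) ≤ B ∧
      (D : ℚ) ≤ ∑ x ∈ N, (d x : ℚ) * (if σ x then 1 else 0)) := by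
  simp only [mul_boole, ← Finset.sum_filter, ← Nat.cast_sum, Nat.cast_le]
  exact (N.exists_filter_iff_exists_subset
    fun N' => (∑ x ∈ N', c x) ≤ B ∧ D ≤ ∑ x ∈ N', d x).symm

/-- Knapsack `(N,c,d,B,D)` is a yes-instance iff the constructed NAP instance on the
star (edge weight `d x` to leaf `x`, projects `(0,0)` and `(c x, 1)`) is a yes-instance:
a project selection is a choice `σ : ι → Bool` (true = cost-`c x` project of probability 1),
with total cost `≤ B` and `PD = ∑ λ·w ≥ D`. -/
theorem stmt_3 {ι : Type*} [DecidableEq ι] (N : Finset ι) (c d : ι → ℕ) (B D : ℕ) :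
    (∃ N' ⊆ N, (∑ x ∈ N', c x) ≤ B ∧ D ≤ ∑ x ∈ N', d x) ↔
    (∃ σ : ι → Bool, (∑ x ∈ N, if σ x then c x else 0) ≤ B ∧
      (D : ℚ) ≤ ∑ x ∈ N, (d x : ℚ) * (if σ x then 1 else 0)) :=
  stmt_3_general N c d B D
end

section
/- The Multi-Subset Sum instance (Z, Q, k) has a solution if and only if the constructed Multiple-Choice Knapsack instance with k classes N_1,...,N_k, where class N_i contains items a_{i,j} of cost and value both equal to 2^{ℓ·i} + z_j (with 2^ℓ larger than max Z), budget and value threshold both equal to Q + Σ_{i=1}^k 2^{ℓ·i}, has a solution. -/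
/-!
Each class contributes exactly one item, so the powers `2 ^ (ℓ * i)` add up to the same amount
on both sides and the MCKP instance is solvable iff some choice `f : Fin k → Fin n` has
`∑ i, z (f i) = Q`. Such choices correspond to multiplicity vectors: `f` gives `q j = #f⁻¹(j)`,
and a vector `q` is realised by enumerating the `∑ j, q j = k` elements of `Σ j, Fin (q j)`.
-/

section MultiplicityVectors

variable {ι M : Type*} [Fintype ι] [AddCommMonoid M]

theorem Fintype.sum_card_fiber_smul {α : Type*} [Fintype α] [DecidableEq ι] (f : α → ι)
    (z : ι → M) : ∑ j, Fintype.card {i // f i = j} • z j = ∑ i, z (f i) := by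
  simp only [← Fintype.sum_fiberwise' f z, Finset.sum_const, Finset.card_univ]

theorem Fintype.sum_card_fiber {α : Type*} [Fintype α] [DecidableEq ι] (f : α → ι) :
    ∑ j, Fintype.card {i // f i = j} = Fintype.card α := by
  rw [← Fintype.card_sigma, Fintype.card_congr (Equiv.sigmaFiberEquiv f)]

theorem exists_fin_sum_comp_eq_sum_smul (q : ι → ℕ) (z : ι → M) :
    ∃ f : Fin (∑ j, q j) → ι, ∑ i, z (f i) = ∑ j, q j • z j := by
  let e : (Σ j, Fin (q j)) ≃ Fin (∑ j, q j) := Fintype.equivFinOfCardEq (by simp)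
  refine ⟨fun i => (e.symm i).1, ?_⟩
  rw [e.symm.sum_comp (fun s => z s.1), Fintype.sum_sigma]
  simp

theorem exists_sum_smul_eq_and_sum_eq_iff (z : ι → M) (Q : M) (k : ℕ) :
    (∃ q : ι → ℕ, ∑ j, q j • z j = Q ∧ ∑ j, q j = k) ↔ ∃ f : Fin k → ι, ∑ i, z (f i) = Q := by
  classical
  constructor
  · rintro ⟨q, rfl, rfl⟩
    exact exists_fin_sum_comp_eq_sum_smul q z
  · rintro ⟨f, rfl⟩
    exact ⟨fun j => Fintype.card {i // f i = j}, Fintype.sum_card_fiber_smul f z,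
      (Fintype.sum_card_fiber f).trans (Fintype.card_fin k)⟩

end MultiplicityVectors

theorem stmt_6_general (n k ℓ Q : ℕ) (z : Fin n → ℕ) :
    (∃ q : Fin n → ℕ, (∑ j, q j * z j) = Q ∧ (∑ j, q j) = k) ↔
    (∃ f : Fin k → Fin n,
      (∑ i : Fin k, (2 ^ (ℓ * (i.1 + 1)) + z (f i))) ≤ Q + (∑ i : Fin k, 2 ^ (ℓ * (i.1 + 1))) ∧
      Q + (∑ i : Fin k, 2 ^ (ℓ * (i.1 + 1))) ≤ ∑ i : Fin k, (2 ^ (ℓ * (i.1 + 1)) + z (f i))) := by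
  have hsubsetSum := exists_sum_smul_eq_and_sum_eq_iff z Q k
  simp only [smul_eq_mul] at hsubsetSum
  rw [hsubsetSum]
  refine exists_congr fun f => ?_
  rw [Finset.sum_add_distrib]
  omega

/-- The Multi-Subset Sum instance `(Z,Q,k)` has a solution iff the constructed MCKP
instance has one: `k` classes, class `i` containing items of cost = value
`2^(ℓ·i) + z_j`, with budget and value threshold both `Q + ∑_{i=1}^k 2^(ℓ·i)`,
where `2^ℓ` exceeds every element of `Z`. -/
theorem stmt_6 (n k ℓ Q : ℕ) (z : Fin n → ℕ) (hz : ∀ j, 0 < z j)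
    (hℓ : ∀ j, z j < 2 ^ ℓ) :
    (∃ q : Fin n → ℕ, (∑ j, q j * z j) = Q ∧ (∑ j, q j) = k) ↔
    (∃ f : Fin k → Fin n,
      (∑ i : Fin k, (2 ^ (ℓ * (i.1 + 1)) + z (f i))) ≤ Q + (∑ i : Fin k, 2 ^ (ℓ * (i.1 + 1))) ∧
      Q + (∑ i : Fin k, 2 ^ (ℓ * (i.1 + 1))) ≤ ∑ i : Fin k, (2 ^ (ℓ * (i.1 + 1)) + z (f i))) :=
  stmt_6_general n k ℓ Q z
end

section
/- Correctness of the DP over costs for MCKP: for every i ∈ [m] and vector p = (p_1,...,p_{k-1}) of multiplicities of the costs c_1 < ... < c_{k-1} (where c_k is the largest cost), the table value F[i,p] defined by the recurrence F[i+1,p] = max over a ∈ N_{i+1} of (F[i, p with coordinate j decremented] + d(a) if c(a)=c_j < c_k and p_j ≥ 1; F[i,p] + d(a) if c(a) = c_k) equals the maximum of d_Σ(S) over all sets S containing exactly one item from each of N_1,...,N_i and exactly p_j items of cost c_j for each j < k (and equals -∞ if no such set exists). -/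
/-!
Give every item `a` the profile `v a := e_j` if `c a = c_j` with `j < k`, and `v a := 0` if
`c a = c_k`; a selection has multiplicity vector `p` exactly when the profiles of its items add
up to `p`. For any profile map into a canonically ordered monoid with truncated subtraction, a
best selection from the first `i + 1` classes with total profile `p` is a best selection from the
first `i` classes with total `p - v a`, completed by an item `a` of class `i + 1` with `v a ≤ p`.
For the profile above, the condition `v a ≤ p` and the vector `p - v a` are exactly the case
distinction of the recurrence.
-/

open Finset

lemma Pi.single_le_iff {ι β : Type*} [DecidableEq ι] [AddCommMonoid β] [PartialOrder β]
    [CanonicallyOrderedAdd β] {p : ι → β} {j : ι} {x : β} : Pi.single j x ≤ p ↔ x ≤ p j := by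
  refine ⟨fun h => by simpa using h j, fun h i => ?_⟩
  rcases eq_or_ne i j with rfl | hi
  · simpa using h
  · simp [hi]

lemma Pi.sub_single_eq_update {ι β : Type*} [DecidableEq ι] [AddCommMonoid β] [PartialOrder β]
    [Sub β] [OrderedSub β] (p : ι → β) (j : ι) (x : β) :
    p - Pi.single j x = Function.update p j (p j - x) := by
  funext i
  rcases eq_or_ne i j with rfl | hi
  · simp
  · simp [hi]

lemma Finset.sup_univ_ite_eq_and {ι α : Type*} [Fintype ι] [DecidableEq ι] [SemilatticeSup α]
    [OrderBot α] (j : ι) (P : ι → Prop) [DecidablePred P] (f : ι → α) :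
    (univ.sup fun i => if i = j ∧ P i then f i else ⊥) = if P j then f j else ⊥ := by
  split_ifs with hj
  · refine le_antisymm (Finset.sup_le fun i _ => ?_) (le_sup_of_le (mem_univ j) (by simp [hj]))
    split_ifs with h
    · rw [h.1]
    · exact bot_le
  · exact (Finset.sup_eq_bot_iff _ _).mpr fun i _ => if_neg (by rintro ⟨rfl, h⟩; exact hj h)

namespace MCKP

def firstClasses (m i : ℕ) : Finset (Fin m) := univ.filter fun j => j.1 < i

@[simp]
lemma mem_firstClasses {m i : ℕ} {j : Fin m} : j ∈ firstClasses m i ↔ j.1 < i := by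
  simp [firstClasses]

lemma firstClasses_one {m : ℕ} (hm : 0 < m) : firstClasses m 1 = {⟨0, hm⟩} := by
  ext j
  simp [Fin.ext_iff]

lemma firstClasses_succ {m i : ℕ} (hi : i < m) :
    firstClasses m (i + 1) = insert ⟨i, hi⟩ (firstClasses m i) := by
  ext j
  simp only [mem_firstClasses, mem_insert, Fin.ext_iff]
  omega

lemma sum_firstClasses_succ {m i : ℕ} {β : Type*} [AddCommMonoid β] (hi : i < m) (w : Fin m → β) :
    ∑ j ∈ firstClasses m (i + 1), w j = ∑ j ∈ firstClasses m i, w j + w ⟨i, hi⟩ := by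
  rw [firstClasses_succ hi, sum_insert (by simp), add_comm]

lemma sum_firstClasses_update {m i : ℕ} {α β : Type*} [AddCommMonoid β] (hi : i < m)
    (g : Fin m → α) (a : α) (w : α → β) :
    ∑ j ∈ firstClasses m i, w (Function.update g ⟨i, hi⟩ a j) = ∑ j ∈ firstClasses m i, w (g j) :=
  sum_congr rfl fun j hj => by
    rw [Function.update_of_ne (fun h => by simp [h] at hj)]

section Selections

variable {α M : Type*} [Fintype α] [DecidableEq α] [AddCommMonoid M] [DecidableEq M] {m : ℕ}
  (N : Fin m → Finset α) (v : α → M) (d : α → ℕ)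

/-- Selections are total functions on `Fin m`: the coordinates `j ≥ i` are unconstrained. -/
def selections (i : ℕ) (p : M) : Finset (Fin m → α) :=
  univ.filter fun f => (∀ j : Fin m, j.1 < i → f j ∈ N j) ∧ ∑ j ∈ firstClasses m i, v (f j) = p

def optValue (i : ℕ) (p : M) : WithBot ℕ :=
  (selections N v i p).sup fun f => ((∑ j ∈ firstClasses m i, d (f j) : ℕ) : WithBot ℕ)

variable {N v}

lemma mem_selections {i : ℕ} {p : M} {f : Fin m → α} :
    f ∈ selections N v i p ↔
      (∀ j : Fin m, j.1 < i → f j ∈ N j) ∧ ∑ j ∈ firstClasses m i, v (f j) = p := by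
  simp [selections]

variable (N v)

lemma optValue_one (hm : 0 < m) (p : M) :
    optValue N v d 1 p = (N ⟨0, hm⟩).sup fun a => if v a = p then (d a : WithBot ℕ) else ⊥ := by
  have hfirst : ∀ j : Fin m, j.1 < 1 → j = ⟨0, hm⟩ := fun j hj => Fin.ext (show j.1 = 0 by omega)
  apply le_antisymm
  · refine Finset.sup_le fun f hf => ?_
    obtain ⟨hN, hv⟩ := mem_selections.mp hf
    rw [firstClasses_one hm, sum_singleton] at hv ⊢
    exact le_sup_of_le (hN _ zero_lt_one) (by rw [if_pos hv])
  · refine Finset.sup_le fun a ha => ?_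
    split_ifs with hv
    · have hsel : (fun _ => a) ∈ selections N v 1 p := by
        refine mem_selections.mpr ⟨fun j hj => hfirst j hj ▸ ha, ?_⟩
        rw [firstClasses_one hm, sum_singleton, hv]
      exact le_sup_of_le hsel (by rw [firstClasses_one hm, sum_singleton])
    · exact bot_le

section Succ

variable [PartialOrder M] [CanonicallyOrderedAdd M] [Sub M] [OrderedSub M] [AddLeftReflectLE M]
variable {N v}

lemma mem_selections_succ {i : ℕ} (hi : i < m) {p : M} {f : Fin m → α} :
    f ∈ selections N v (i + 1) p ↔
      f ∈ selections N v i (p - v (f ⟨i, hi⟩)) ∧ f ⟨i, hi⟩ ∈ N ⟨i, hi⟩ ∧ v (f ⟨i, hi⟩) ≤ p := by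
  simp only [mem_selections, sum_firstClasses_succ hi]
  constructor
  · rintro ⟨hN, rfl⟩
    exact ⟨⟨fun j hj => hN j (by omega), (add_tsub_cancel_right _ _).symm⟩, hN _ i.lt_succ_self,
      le_add_self⟩
  · rintro ⟨⟨hN, hv⟩, ha, hle⟩
    refine ⟨fun j hj => ?_, by rw [hv, tsub_add_cancel_of_le hle]⟩
    rcases Nat.lt_succ_iff_lt_or_eq.mp hj with hj | hj
    · exact hN j hj
    · exact (show j = ⟨i, hi⟩ from Fin.ext hj) ▸ ha

lemma update_mem_selections_succ {i : ℕ} (hi : i < m) {q : M} {g : Fin m → α} {a : α}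
    (hg : g ∈ selections N v i q) (ha : a ∈ N ⟨i, hi⟩) :
    Function.update g ⟨i, hi⟩ a ∈ selections N v (i + 1) (q + v a) := by
  rw [mem_selections_succ hi, Function.update_self, add_tsub_cancel_right]
  obtain ⟨hN, hv⟩ := mem_selections.mp hg
  refine ⟨mem_selections.mpr ⟨fun j hj => ?_, ?_⟩, ha, le_add_self⟩
  · rw [Function.update_of_ne (fun h => by simp [h] at hj)]
    exact hN j hj
  · rwa [sum_firstClasses_update]

variable (N v)

open scoped Classical in
theorem optValue_succ {i : ℕ} (hi : i < m) (p : M) :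
    optValue N v d (i + 1) p = (N ⟨i, hi⟩).sup fun a =>
      if v a ≤ p then optValue N v d i (p - v a) + (d a : WithBot ℕ) else ⊥ := by
  apply le_antisymm
  · refine Finset.sup_le fun f hf => ?_
    obtain ⟨hf, ha, hle⟩ := (mem_selections_succ hi).mp hf
    refine le_sup_of_le ha ?_
    rw [if_pos hle, sum_firstClasses_succ hi, Nat.cast_add]
    exact add_le_add_left
      (le_sup (f := fun f => ((∑ j ∈ firstClasses m i, d (f j) : ℕ) : WithBot ℕ)) hf) _
  · refine Finset.sup_le fun a ha => ?_
    split_ifs with hle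
    · rw [optValue, apply_sup_eq_sup_comp_of_linearOrder (· + (d a : WithBot ℕ))
        (fun _ _ h => add_le_add_left h _) (WithBot.bot_add _)]
      refine Finset.sup_le fun g hg => ?_
      have hsel := update_mem_selections_succ hi hg ha
      rw [tsub_add_cancel_of_le hle] at hsel
      refine le_sup_of_le hsel (le_of_eq ?_)
      rw [sum_firstClasses_succ hi, sum_firstClasses_update, Function.update_self, Nat.cast_add]
      rfl
    · exact bot_le

end Succ

end Selections

section Costs

variable {α : Type*} {k : ℕ} (c : α → ℕ) (cVal : Fin (k + 1) → ℕ)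

def costProfile (a : α) : Fin k → ℕ := fun jc => if c a = cVal jc.castSucc then 1 else 0

lemma card_filter_cost_eq_sum_costProfile {m : ℕ} (i : ℕ) (f : Fin m → α) (jc : Fin k) :
    (univ.filter fun j : Fin m => j.1 < i ∧ c (f j) = cVal jc.castSucc).card =
      (∑ j ∈ firstClasses m i, costProfile c cVal (f j)) jc := by
  rw [Finset.sum_apply, firstClasses, ← filter_filter, card_filter]
  rfl

variable {c cVal} {a : α}

lemma costProfile_of_castSucc (hmono : StrictMono cVal) {j : Fin k}
    (h : c a = cVal j.castSucc) : costProfile c cVal a = Pi.single j 1 := by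
  funext jc
  simp only [costProfile, h, hmono.injective.eq_iff, Fin.castSucc_inj, Pi.single_apply, eq_comm]

lemma costProfile_of_last (hmono : StrictMono cVal) (h : c a = cVal (Fin.last k)) :
    costProfile c cVal a = 0 := by
  funext jc
  simp only [costProfile, h, hmono.injective.eq_iff, (Fin.castSucc_lt_last jc).ne', if_false,
    Pi.zero_apply]

lemma costProfile_eq_iff (hmono : StrictMono cVal) (hcov : ∃ j, c a = cVal j) (p : Fin k → ℕ) :
    costProfile c cVal a = p ↔
      (∃ j : Fin k, c a = cVal j.castSucc ∧ p = Pi.single j 1) ∨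
        (c a = cVal (Fin.last k) ∧ p = 0) := by
  constructor
  · rintro rfl
    obtain ⟨j, hj⟩ := hcov
    rcases Fin.eq_castSucc_or_eq_last j with ⟨jc, rfl⟩ | rfl
    · exact Or.inl ⟨jc, hj, costProfile_of_castSucc hmono hj⟩
    · exact Or.inr ⟨hj, costProfile_of_last hmono hj⟩
  · rintro (⟨j, hj, rfl⟩ | ⟨hl, rfl⟩)
    · exact costProfile_of_castSucc hmono hj
    · exact costProfile_of_last hmono hl

open scoped Classical in
lemma sup_recurrence_eq (hmono : StrictMono cVal) (hcov : ∃ j, c a = cVal j)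
    (G : (Fin k → ℕ) → WithBot ℕ) (x : WithBot ℕ) (p : Fin k → ℕ) :
    (univ.sup fun j : Fin k =>
        if c a = cVal j.castSucc ∧ 1 ≤ p j then G (Function.update p j (p j - 1)) + x else ⊥) ⊔
      (if c a = cVal (Fin.last k) then G p + x else ⊥) =
      if costProfile c cVal a ≤ p then G (p - costProfile c cVal a) + x else ⊥ := by
  obtain ⟨j, hj⟩ := hcov
  rcases Fin.eq_castSucc_or_eq_last j with ⟨jc, rfl⟩ | rfl
  · have hcost : ∀ j' : Fin k, c a = cVal j'.castSucc ↔ j' = jc := fun j' => by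
      rw [hj, hmono.injective.eq_iff, Fin.castSucc_inj, eq_comm]
    have hlast : c a ≠ cVal (Fin.last k) := by
      rw [hj, hmono.injective.ne_iff]
      exact (Fin.castSucc_lt_last jc).ne
    rw [costProfile_of_castSucc hmono hj, if_neg hlast, sup_bot_eq, Pi.single_le_iff,
      Pi.sub_single_eq_update]
    simp only [hcost, Finset.sup_univ_ite_eq_and]
    congr
  · rw [costProfile_of_last hmono hj, if_pos (zero_le : 0 ≤ p), tsub_zero, if_pos hj,
      (Finset.sup_eq_bot_iff _ _).mpr fun j' _ => if_neg fun h => ?_, bot_sup_eq]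
    rw [hj, hmono.injective.eq_iff] at h
    exact (Fin.castSucc_lt_last j').ne' h.1

lemma optValue_costProfile [Fintype α] [DecidableEq α] {m : ℕ} (N : Fin m → Finset α) (d : α → ℕ)
    (i : ℕ) (p : Fin k → ℕ) :
    optValue N (costProfile c cVal) d i p =
      ((univ : Finset (Fin m → α)).filter fun f =>
          (∀ j : Fin m, j.1 < i → f j ∈ N j) ∧
          ∀ jc : Fin k, (univ.filter fun j : Fin m =>
            j.1 < i ∧ c (f j) = cVal jc.castSucc).card = p jc).sup
        fun f => ((∑ j ∈ univ.filter (fun j : Fin m => j.1 < i), d (f j) : ℕ) : WithBot ℕ) := by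
  unfold optValue
  congr 1
  ext f
  simp only [mem_selections, mem_filter, mem_univ, true_and, card_filter_cost_eq_sum_costProfile,
    funext_iff]

end Costs

end MCKP

open Classical Finset in
/-- Correctness of the DP over costs for MCKP. Costs are `cVal 0 < … < cVal k`
(so `cVal (Fin.last k)` is the largest cost `c_k`); a vector `p : Fin k → ℕ`
records, for each non-maximal cost, how many chosen items have that cost.
If the table `F` satisfies the initialization from singletons of `N_1` and the
recurrence
`F[i+1,p] = max_{a ∈ N_{i+1}} (F[i, p - e_j] + d a  if c a = c_j < c_k ∧ p_j ≥ 1;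
                               F[i, p] + d a        if c a = c_k)`,
then `F[i,p]` equals the maximum of `d_Σ(S)` over all selections of exactly one
item from each of `N_1,…,N_i` whose cost-multiplicity vector is `p`
(and `⊥ = -∞` if no such selection exists). -/
theorem stmt_9 {α : Type*} [Fintype α] [DecidableEq α]
    (m k : ℕ) (N : Fin m → Finset α) (c d : α → ℕ)
    (cVal : Fin (k + 1) → ℕ) (hmono : StrictMono cVal)
    (hcov : ∀ a : α, ∃ j, c a = cVal j)
    (F : ℕ → (Fin k → ℕ) → WithBot ℕ)
    (hinit : ∀ p : Fin k → ℕ, F 1 p =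
      (if hm : 0 < m then
        (N ⟨0, hm⟩).sup (fun a =>
          if (∃ j : Fin k, c a = cVal j.castSucc ∧ p = Pi.single j 1) ∨
             (c a = cVal (Fin.last k) ∧ p = 0)
          then (d a : WithBot ℕ) else ⊥)
      else ⊥))
    (hrec : ∀ i : ℕ, 1 ≤ i → ∀ hi : i < m, ∀ p : Fin k → ℕ,
      F (i + 1) p = (N ⟨i, hi⟩).sup (fun a =>
        (Finset.univ.sup (fun j : Fin k =>
          if c a = cVal j.castSucc ∧ 1 ≤ p j
          then F i (Function.update p j (p j - 1)) + (d a : WithBot ℕ) else ⊥))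
        ⊔ (if c a = cVal (Fin.last k) then F i p + (d a : WithBot ℕ) else ⊥))) :
    ∀ i : ℕ, 1 ≤ i → i ≤ m → ∀ p : Fin k → ℕ,
      F i p = ((Finset.univ : Finset (Fin m → α)).filter (fun f =>
          (∀ j : Fin m, j.1 < i → f j ∈ N j) ∧
          (∀ jc : Fin k, (Finset.univ.filter (fun j : Fin m =>
              j.1 < i ∧ c (f j) = cVal jc.castSucc)).card = p jc))).sup
        (fun f =>
          ((∑ j ∈ Finset.univ.filter (fun j : Fin m => j.1 < i), d (f j) : ℕ) : WithBot ℕ)) := by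
  intro i hi₁ him p
  rw [← MCKP.optValue_costProfile]
  revert p him
  induction i, hi₁ using Nat.le_induction with
  | base =>
    intro hm p
    rw [hinit, dif_pos (show 0 < m from hm), MCKP.optValue_one _ _ _ hm]
    exact sup_congr rfl fun a _ =>
      if_congr (MCKP.costProfile_eq_iff hmono (hcov a) p).symm rfl rfl
  | succ i hi ih =>
    intro him p
    rw [hrec i hi him, MCKP.optValue_succ _ _ _ him]
    refine sup_congr rfl fun a _ => ?_
    rw [← funext (ih (by omega)), MCKP.sup_recurrence_eq hmono (hcov a)]
end

section
/- An MCKP instance (N, {N_1,...,N_m}, c, d, B, D) is a yes-instance if and only if the GNAP instance on the star with center v, leaves x_1,...,x_m, all edge weights 1, project lists P_i = {(c(a), d(a)/D) : a ∈ N_i}, budget B and diversity threshold 1 is a yes-instance, provided 0 ≤ d(a) ≤ D for all items a. -/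
open Finset

theorem Nat.le_sum_iff_one_le_sum_cast_div {ι K : Type*} [Field K] [LinearOrder K]
    [IsStrictOrderedRing K] (s : Finset ι) (x : ι → ℕ) {D : ℕ} (hD : 0 < D) :
    D ≤ ∑ i ∈ s, x i ↔ (1 : K) ≤ ∑ i ∈ s, (x i : K) / D := by
  rw [← sum_div, le_div_iff₀ (by exact_mod_cast hD), one_mul]
  exact_mod_cast Iff.rfl

theorem stmt_11_general {α : Type*} (m : ℕ) (N : Fin m → Finset α) (c d : α → ℕ)
    (B D : ℕ) (hD : 0 < D) :
    (∃ f : Fin m → α, (∀ i, f i ∈ N i) ∧ (∑ i, c (f i)) ≤ B ∧ D ≤ ∑ i, d (f i)) ↔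
    (∃ f : Fin m → α, (∀ i, f i ∈ N i) ∧ (∑ i, c (f i)) ≤ B ∧
      (1 : ℚ) ≤ ∑ i, (1 : ℚ) * ((d (f i) : ℚ) / (D : ℚ))) := by
  simp only [one_mul]
  refine exists_congr fun f => and_congr_right' <| and_congr_right' ?_
  exact Nat.le_sum_iff_one_le_sum_cast_div _ _ hD

/-- An MCKP instance `(N, c, d, B, D)` with `0 ≤ d a ≤ D` is a yes-instance iff
the GNAP instance on the star with unit edge weights, project lists
`P_i = {(c a, d a / D) : a ∈ N_i}`, budget `B` and diversity threshold `1`,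
is a yes-instance (on a star with unit weights, PD is the sum of the chosen
survival probabilities). -/
theorem stmt_11 {α : Type*} (m : ℕ) (N : Fin m → Finset α) (c d : α → ℕ)
    (B D : ℕ) (hD : 0 < D) (hval : ∀ i, ∀ a ∈ N i, d a ≤ D) :
    (∃ f : Fin m → α, (∀ i, f i ∈ N i) ∧ (∑ i, c (f i)) ≤ B ∧ D ≤ ∑ i, d (f i)) ↔
    (∃ f : Fin m → α, (∀ i, f i ∈ N i) ∧ (∑ i, c (f i)) ≤ B ∧
      (1 : ℚ) ≤ ∑ i, (1 : ℚ) * ((d (f i) : ℚ) / (D : ℚ))) :=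
  stmt_11_general m N c d B D hD
end

section
/- Attaching a caterpillar spine with a guaranteed-survival taxon preserves solutions: given a GNAP instance I on a star with leaves x_1,...,x_n and D = 1, construct the caterpillar tree with internal path v_1,...,v_n, edges (v_i, x_i), (v_i, v_{i+1}) for i < n, edges (v_n, x_n), (v_n, x*), all of weight 1, where x* has projects (0,0) and (1,1). Then S is a solution of I with budget B and threshold 1 if and only if S ∪ {the cost-1 project of x*} is a solution of the new instance with budget B+1 and threshold n+1. -/
open Finset

/-- Every spine edge has the sure survivor `x*` below it, so it contributes its full weight;
the `n - 1` spine edges and the edge to `x*` add exactly `n` to the star's diversity. -/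
lemma caterpillar_pd_eq {n : ℕ} (hn : 0 < n) (w : Fin n → ℚ) :
    (∑ i, (1 : ℚ) * (1 - (1 - w i)))
      + (∑ i ∈ range (n - 1), (1 : ℚ) *
          (1 - (∏ j ∈ univ.filter (fun j : Fin n => i < j.1), (1 - w j)) * (1 - 1)))
      + (1 : ℚ) * (1 - (1 - 1))
      = n + ∑ i, (1 : ℚ) * w i := by
  simp only [sub_self, mul_zero, sub_zero, sub_sub_cancel, one_mul, mul_one, sum_const,
    card_range, nsmul_eq_mul, Nat.cast_sub hn, Nat.cast_one]
  ring

open Classical Finset in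
theorem stmt_12_general (n : ℕ) (hn : 0 < n) (B : ℕ)
    (σ : Fin n → ℕ × ℚ) :
    ((∑ i, (σ i).1) ≤ B ∧ (1 : ℚ) ≤ ∑ i, (1 : ℚ) * (σ i).2) ↔
    ((∑ i, (σ i).1) + 1 ≤ B + 1 ∧
      ((n : ℚ) + 1) ≤
        (∑ i, (1 : ℚ) * (1 - (1 - (σ i).2)))
        + (∑ i ∈ Finset.range (n - 1), (1 : ℚ) *
            (1 - (∏ j ∈ Finset.univ.filter (fun j : Fin n => i < j.1),
              (1 - (σ j).2)) * (1 - 1)))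
        + (1 : ℚ) * (1 - (1 - 1))) := by
  rw [caterpillar_pd_eq hn, Nat.add_le_add_iff_right, add_le_add_iff_left]

open Classical Finset in
/-- Attaching a caterpillar spine with a guaranteed-survival taxon `x*` (projects
`(0,0)` and `(1,1)`; its cost-1 project is selected) preserves solutions: a project
selection `σ` (one project per taxon) is a solution of the star instance with budget
`B` and threshold `1` iff together with the cost-1 project of `x*` it is a solution
of the caterpillar instance (spine `v_1,…,v_n`, all edge weights `1`) with budget
`B+1` and threshold `n+1`. The new PD is computed by the offspring-product formula:
the edge `(v_i,x_i)` contributes `w_i`, every spine edge `(v_i,v_{i+1})` has `x*`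
among its offspring, and the edge `(v_n,x*)` carries probability `1`. -/
theorem stmt_12 (n : ℕ) (hn : 0 < n) (P : Fin n → Finset (ℕ × ℚ)) (B : ℕ)
    (hw : ∀ i, ∀ p ∈ P i, 0 ≤ p.2 ∧ p.2 ≤ 1)
    (σ : Fin n → ℕ × ℚ) (hσ : ∀ i, σ i ∈ P i) :
    ((∑ i, (σ i).1) ≤ B ∧ (1 : ℚ) ≤ ∑ i, (1 : ℚ) * (σ i).2) ↔
    ((∑ i, (σ i).1) + 1 ≤ B + 1 ∧
      ((n : ℚ) + 1) ≤
        (∑ i, (1 : ℚ) * (1 - (1 - (σ i).2)))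
        + (∑ i ∈ Finset.range (n - 1), (1 : ℚ) *
            (1 - (∏ j ∈ Finset.univ.filter (fun j : Fin n => i < j.1),
              (1 - (σ j).2)) * (1 - 1)))
        + (1 : ℚ) * (1 - (1 - 1))) :=
  stmt_12_general n hn B σ
end

section
/- Penalty-Sum reduces to unit-cost GNAP on trees of height 2: the Penalty-Sum instance (T, k, Q, D) with tuples t_i = (a_i, b_i), a_i ≥ 0, b_i ∈ (0,1), has a solution S ⊆ T of size k with Σ_{t_i∈S} a_i - Q·Π_{t_i∈S} b_i ≥ D if and only if the GNAP instance on the tree with root r, child v of r, leaves x_1,...,x_n children of v, edge weights λ((r,v)) = 2^t·Q and λ((v,x_i)) = 2^t·a_i/(1-b_i), project lists P_i = ((0,0),(1,1-b_i)), budget k, and threshold 2^t(D+Q) has a solution (where 2^t clears all denominators to make weights integral). -/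
/-!
The root-edge survival product is `∏ (1 - (1 - b_i)) = ∏ b_i` and the leaf-edge weights cancel
the factors `1 - b_i`, so the phylogenetic diversity of `S'` is exactly
`2^t · (∑_{S'} a_i - Q ∏_{S'} b_i + Q)`, so both instances ask the same inequality of a set.
The only difference is `|S'| ≤ k` versus `|S| = k`, which is bridged by padding `S'` up to
size `k`: with `a_i ≥ 0` and `b_i ≤ 1` the Penalty-Sum objective is monotone in the set.
-/

open Finset

variable {ι R : Type*}

def penaltySumValue [CommRing R] (a b : ι → R) (Q : R) (S : Finset ι) : R :=
  ∑ i ∈ S, a i - Q * ∏ i ∈ S, b i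

theorem penaltySumValue_mono [CommRing R] [PartialOrder R] [IsOrderedRing R] {a b : ι → R}
    {Q : R} (ha : ∀ i, 0 ≤ a i) (hb₀ : ∀ i, 0 ≤ b i) (hb₁ : ∀ i, b i ≤ 1) (hQ : 0 ≤ Q) :
    Monotone (penaltySumValue a b Q) := fun _ _ hST =>
  sub_le_sub (sum_le_sum_of_subset_of_nonneg hST fun i _ _ => ha i)
    (mul_le_mul_of_nonneg_left (prod_anti_set_of_le_one hb₀ hb₁ hST) hQ)

theorem gnap_diversity_eq_penaltySumValue [Field R] (c Q : R) {a b : ι → R} (hb : ∀ i, b i ≠ 1)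
    (S : Finset ι) :
    ∑ i ∈ S, c * a i / (1 - b i) * (1 - b i) + c * Q * (1 - ∏ i ∈ S, (1 - (1 - b i)))
      = c * (penaltySumValue a b Q S + Q) := by
  have hsum : ∑ i ∈ S, c * a i / (1 - b i) * (1 - b i) = c * ∑ i ∈ S, a i := by
    rw [mul_sum]
    exact sum_congr rfl fun i _ => div_mul_cancel₀ _ (sub_ne_zero.2 (hb i).symm)
  simp only [hsum, sub_sub_cancel, penaltySumValue]
  ring

/-- Penalty-Sum reduces to unit-cost GNAP on a tree of height 2 (root `r`, single
child `v`, leaves `x_1,…,x_n`): the Penalty-Sum instance `(T,k,Q,D)` with tuples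
`(a_i, b_i)` has a solution of size exactly `k` iff the GNAP instance with edge
weights `λ(r,v) = 2^t·Q`, `λ(v,x_i) = 2^t·a_i/(1-b_i)`, projects `(0,0)` and
`(1, 1-b_i)`, budget `k` and threshold `2^t·(D+Q)` has a solution (a set `S'` of
taxa receiving their cost-1 project, `|S'| ≤ k`, with
`PD = ∑_{i∈S'} λ(v,x_i)·(1-b_i) + λ(r,v)·(1 - ∏_{i∈S'}(1-(1-b_i))) ≥ 2^t(D+Q)`). -/
theorem stmt_15 (n k Q t : ℕ) (hk : k ≤ n) (D : ℚ) (a b : Fin n → ℚ)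
    (ha : ∀ i, 0 ≤ a i) (hb : ∀ i, 0 < b i ∧ b i < 1) :
    (∃ S : Finset (Fin n), S.card = k ∧
      D ≤ (∑ i ∈ S, a i) - (Q : ℚ) * ∏ i ∈ S, b i) ↔
    (∃ S' : Finset (Fin n), S'.card ≤ k ∧
      (2 : ℚ) ^ t * (D + Q) ≤
        (∑ i ∈ S', ((2 : ℚ) ^ t * a i / (1 - b i)) * (1 - b i))
        + ((2 : ℚ) ^ t * Q) * (1 - ∏ i ∈ S', (1 - (1 - b i)))) := by
  have hb₁ : ∀ i, b i ≠ 1 := fun i => (hb i).2.ne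
  simp_rw [gnap_diversity_eq_penaltySumValue _ _ hb₁, mul_le_mul_iff_right₀ (pow_pos (two_pos : (0 : ℚ) < 2) t),
    add_le_add_iff_right]
  constructor
  · rintro ⟨S, hcard, hS⟩
    exact ⟨S, hcard.le, hS⟩
  · rintro ⟨S', hcard, hS'⟩
    obtain ⟨S, hsub, hScard⟩ := exists_superset_card_eq hcard (by simpa using hk)
    exact ⟨S, hScard, hS'.trans <| penaltySumValue_mono ha (fun i => (hb i).1.le)
      (fun i => (hb i).2.le) Q.cast_nonneg hsub⟩
end

section
/- In the ultrametric reduction of Theorem on unit-cost GNAP, for S ⊆ X and S' = S ∪ X*, the expected phylogenetic diversity satisfies PD_{T'}(S') = (2^t - 1)·[PD_T(S) + (2^{t·|X_2|} - 1)·λ((r,v)) + |X_2|·(1 - 2^{-t})·λ((v,x_1))], where X* is the set of added dummy leaves x_i* (each with survival probability 1 - 2^{-t} at cost 1) and X_2 is the set of original leaves with λ(v,x_i) < λ(v,x_1). -/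
/-!
Write `q = 2^t`, `M = λ(v,x_1)` and `Q = 2^{t·|X₂|}`. The weights of `T'` are chosen so that
each part of `T'` contributes `q - 1` times the matching part of the right-hand side: the root
edge gives `(q - 1)·λ(r,v)·(Q - Π_{x ∈ S}(1 - w_x))`, a leaf of `X₁` gives `(q - 1)·M·w_x`, and
the cherry at `u_i` gives `(q - 1)·(λ(v,x_i)·w_x + (1 - q⁻¹)·M)` (with `w_x = 0` for `x ∉ S`).
Regrouping the leaf terms yields `PD_T(S)`.
-/

open Finset

section GadgetAlgebra

variable {K : Type*} [Field K]

theorem root_edge_contribution {q Q lamv P : K} (hQ : Q ≠ 0) :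
    lamv * Q * (q - 1) * (1 - Q⁻¹ * P) = (q - 1) * (lamv * (1 - P) + (Q - 1) * lamv) := by
  field_simp
  ring

/- The subtree at `u_i`: the edge `(v,u_i)` of weight `q(M - l)` above `x_i` (survival `s`)
and `x_i*` (survival `1 - q⁻¹`), and the two pendant edges of weight `q l - M`. -/
theorem cherry_contribution {q M l s : K} (hq : q ≠ 0) :
    q * (M - l) * (1 - (1 - s) * q⁻¹) + (q * l - M) * s + (q * l - M) * (1 - q⁻¹)
      = (q - 1) * (l * s) + M * (q - 1) * (1 - q⁻¹) := by
  field_simp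
  ring

end GadgetAlgebra

theorem sum_mul_eq_sum_filter_add_sum_filter_not {ι R : Type*} [Fintype ι] [DecidableEq ι]
    [NonUnitalNonAssocSemiring R] (S : Finset ι) (p : ι → Prop) [DecidablePred p] (l w : ι → R) :
    ∑ i ∈ S, l i * w i
      = ∑ i ∈ univ.filter p, l i * (if i ∈ S then w i else 0)
        + ∑ i ∈ univ.filter (fun i => ¬ p i), l i * (if i ∈ S then w i else 0) := by
  simp only [mul_ite, mul_zero]
  rw [sum_filter_add_sum_filter_not, sum_ite_mem, univ_inter]

open Classical Finset in
theorem stmt_18_general (n t : ℕ) (lam : Fin n → ℕ) (lamMax lamv : ℕ)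
    (w : Fin n → ℚ)
    (S : Finset (Fin n)) :
    (((lamv : ℚ) * 2 ^ (t * (Finset.univ.filter (fun i : Fin n => lam i ≠ lamMax)).card)
        * ((2 : ℚ) ^ t - 1)) *
      (1 - (2 : ℚ) ^ (-((t * (Finset.univ.filter
              (fun i : Fin n => lam i ≠ lamMax)).card : ℕ) : ℤ)) *
            ∏ i ∈ S, (1 - w i)))
    + (∑ i ∈ Finset.univ.filter (fun i : Fin n => lam i = lamMax),
        ((2 : ℚ) ^ t - 1) * (lamMax : ℚ) * (if i ∈ S then w i else 0))
    + (∑ i ∈ Finset.univ.filter (fun i : Fin n => lam i ≠ lamMax),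
        ((2 : ℚ) ^ t * ((lamMax : ℚ) - (lam i : ℚ))
            * (1 - (1 - (if i ∈ S then w i else 0)) * (2 : ℚ) ^ (-(t : ℤ)))
         + ((2 : ℚ) ^ t * (lam i : ℚ) - (lamMax : ℚ)) * (if i ∈ S then w i else 0)
         + ((2 : ℚ) ^ t * (lam i : ℚ) - (lamMax : ℚ)) * (1 - (2 : ℚ) ^ (-(t : ℤ)))))
    = ((2 : ℚ) ^ t - 1) *
        (((∑ i ∈ S, (lam i : ℚ) * w i) + (lamv : ℚ) * (1 - ∏ i ∈ S, (1 - w i)))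
         + ((2 : ℚ) ^ (t * (Finset.univ.filter
              (fun i : Fin n => lam i ≠ lamMax)).card) - 1) * (lamv : ℚ)
         + ((Finset.univ.filter (fun i : Fin n => lam i ≠ lamMax)).card : ℚ)
            * (1 - (2 : ℚ) ^ (-(t : ℤ))) * (lamMax : ℚ)) := by
  set X₁ := univ.filter (fun i : Fin n => lam i = lamMax)
  set X₂ := univ.filter (fun i : Fin n => lam i ≠ lamMax)
  have hX₁ : ∑ i ∈ X₁, (lam i : ℚ) * (if i ∈ S then w i else 0)
      = ∑ i ∈ X₁, (lamMax : ℚ) * (if i ∈ S then w i else 0) :=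
    sum_congr rfl fun i hi => by rw [(mem_filter.mp hi).2]
  simp only [zpow_neg, zpow_natCast]
  rw [root_edge_contribution (by positivity),
    sum_congr rfl fun i _ => cherry_contribution (by positivity),
    sum_mul_eq_sum_filter_add_sum_filter_not S (fun i => lam i = lamMax), hX₁,
    sum_add_distrib, sum_const, nsmul_eq_mul, ← mul_sum]
  simp only [mul_assoc, ← mul_sum]
  ring

open Classical Finset in
/-- PD identity for the ultrametric reduction. For `S ⊆ X` and `S' = S ∪ X*`
(all dummy leaves selected with survival probability `1 - 2^{-t}`), with
`X₂ = {i : λ(v,x_i) ≠ λ(v,x_1)}` (here `lamMax = λ(v,x_1)`), the phylogenetic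
diversity of `S'` in the constructed tree `T'` — computed edge by edge: the root
edge of weight `λ(r,v)·2^{t·|X₂|}·(2^t - 1)`, the edges to leaves of `X₁` of weight
`(2^t-1)·λ(v,x_1)`, and for `i ∈ X₂` the edges `(v,u_i)`, `(u_i,x_i)`, `(u_i,x_i*)` —
equals `(2^t - 1)·(PD_T (S) + (2^{t·|X₂|} - 1)·λ(r,v) + |X₂|·(1-2^{-t})·λ(v,x_1))`. -/
theorem stmt_18 (n t : ℕ) (lam : Fin n → ℕ) (lamMax lamv : ℕ)
    (hmax : ∀ i, lam i ≤ lamMax) (w : Fin n → ℚ)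
    (hw : ∀ i, 0 ≤ w i ∧ w i < 1) (S : Finset (Fin n)) :
    (((lamv : ℚ) * 2 ^ (t * (Finset.univ.filter (fun i : Fin n => lam i ≠ lamMax)).card)
        * ((2 : ℚ) ^ t - 1)) *
      (1 - (2 : ℚ) ^ (-((t * (Finset.univ.filter
              (fun i : Fin n => lam i ≠ lamMax)).card : ℕ) : ℤ)) *
            ∏ i ∈ S, (1 - w i)))
    + (∑ i ∈ Finset.univ.filter (fun i : Fin n => lam i = lamMax),
        ((2 : ℚ) ^ t - 1) * (lamMax : ℚ) * (if i ∈ S then w i else 0))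
    + (∑ i ∈ Finset.univ.filter (fun i : Fin n => lam i ≠ lamMax),
        ((2 : ℚ) ^ t * ((lamMax : ℚ) - (lam i : ℚ))
            * (1 - (1 - (if i ∈ S then w i else 0)) * (2 : ℚ) ^ (-(t : ℤ)))
         + ((2 : ℚ) ^ t * (lam i : ℚ) - (lamMax : ℚ)) * (if i ∈ S then w i else 0)
         + ((2 : ℚ) ^ t * (lam i : ℚ) - (lamMax : ℚ)) * (1 - (2 : ℚ) ^ (-(t : ℤ)))))
    = ((2 : ℚ) ^ t - 1) *
        (((∑ i ∈ S, (lam i : ℚ) * w i) + (lamv : ℚ) * (1 - ∏ i ∈ S, (1 - w i)))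
         + ((2 : ℚ) ^ (t * (Finset.univ.filter
              (fun i : Fin n => lam i ≠ lamMax)).card) - 1) * (lamv : ℚ)
         + ((Finset.univ.filter (fun i : Fin n => lam i ≠ lamMax)).card : ℚ)
            * (1 - (2 : ℚ) ^ (-(t : ℤ))) * (lamMax : ℚ)) :=
  stmt_18_general n t lam lamMax lamv w S
end

section
/- In the ultrametric reduction, any solution S' for the constructed instance I' can be transformed into a solution containing all dummy leaves X*: if x_i* ∉ S', then either swapping x_i for x_i* (when x_i ∈ S'), taking S' = X* (when S' ⊂ X*), or swapping some x_j ∈ S' for x_i* yields a set of the same or smaller size whose phylogenetic diversity is at least that of S'; hence if I' has a solution, it has one containing X*. -/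
/-!
All leaves of `T'` lie at depth `(2^t - 1) lamMax` below `v`. Hence adding a missing dummy
`x_i*` whose sibling `x_i` is not selected adds exactly `(2^t - 1) lamMax (1 - 2^{-t})` to the
PD below `v`, while dropping a selected `x_j` loses at most `(2^t - 1) lamMax w_j` there, which
is less since `w_j < 1 - 2^{-t}`. On the root edge such a swap multiplies the extinction
probability by `2^{-t} / (1 - w_j) ≤ 1`. Inserting dummies while the budget has slack and
swapping otherwise fills up `X*` without decreasing PD.
-/

open Classical Finset

/-- The set `X₂` of original taxa whose edge weight is not maximal; these are the
taxa that receive a dummy sibling `x_i*` in the ultrametric gadget. -/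
noncomputable def gadgetX2 (n : ℕ) (lam : Fin n → ℕ) (lamMax : ℕ) : Finset (Fin n) :=
  Finset.univ.filter (fun i : Fin n => lam i ≠ lamMax)

/-- PD in the tree `T'` of the ultrametric reduction, for a selection `SO` of
original taxa (each with survival probability `w i`) and a selection `SD ⊆ X₂`
of dummy taxa (each with survival probability `1 - 2^{-t}`); all other taxa keep
probability `0`. Edges as in the gadget: root edge of weight
`λ(r,v)·2^{t·|X₂|}·(2^t-1)`, edges of weight `(2^t-1)·lamMax` to the leaves of
`X₁`, and for `i ∈ X₂` edges `(v,u_i)`, `(u_i,x_i)`, `(u_i,x_i*)` of weights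
`2^t(lamMax - λ_i)` and `2^t·λ_i - lamMax`. -/
noncomputable def gadgetPD (n t : ℕ) (lam : Fin n → ℕ) (lamMax lamv : ℕ)
    (w : Fin n → ℚ) (SO SD : Finset (Fin n)) : ℚ :=
  (((lamv : ℚ) * 2 ^ (t * (gadgetX2 n lam lamMax).card) * ((2 : ℚ) ^ t - 1)) *
      (1 - (∏ i ∈ SO, (1 - w i)) * ∏ _i ∈ SD, (2 : ℚ) ^ (-(t : ℤ))))
  + (∑ i ∈ Finset.univ.filter (fun i : Fin n => lam i = lamMax),
      ((2 : ℚ) ^ t - 1) * (lamMax : ℚ) * (if i ∈ SO then w i else 0))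
  + (∑ i ∈ gadgetX2 n lam lamMax,
      ((2 : ℚ) ^ t * ((lamMax : ℚ) - (lam i : ℚ))
          * (1 - (1 - (if i ∈ SO then w i else 0))
              * (1 - (if i ∈ SD then 1 - (2 : ℚ) ^ (-(t : ℤ)) else 0)))
       + ((2 : ℚ) ^ t * (lam i : ℚ) - (lamMax : ℚ)) * (if i ∈ SO then w i else 0)
       + ((2 : ℚ) ^ t * (lam i : ℚ) - (lamMax : ℚ))
          * (if i ∈ SD then 1 - (2 : ℚ) ^ (-(t : ℤ)) else 0)))

/-- Expected PD of the subtree hanging below an edge of weight `a` that ends in a cherry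
with two pendant edges of weight `b`, whose leaves survive with probabilities `o` and `d`. -/
def cherryPD (a b o d : ℚ) : ℚ := a * (1 - (1 - o) * (1 - d)) + b * o + b * d

section Cherry

variable {a b o d d' : ℚ}

theorem cherryPD_le_cherryPD_right (ha : 0 ≤ a) (hb : 0 ≤ b) (ho : o ≤ 1) (hd : d ≤ d') :
    cherryPD a b o d ≤ cherryPD a b o d' := by
  have key : cherryPD a b o d' - cherryPD a b o d = (a * (1 - o) + b) * (d' - d) := by
    unfold cherryPD; ring
  linarith [mul_nonneg (add_nonneg (mul_nonneg ha (sub_nonneg.2 ho)) hb) (sub_nonneg.2 hd)]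

theorem cherryPD_sub_cherryPD_zero_le (ha : 0 ≤ a) (ho : 0 ≤ o) (hd : 0 ≤ d) :
    cherryPD a b o d - cherryPD a b 0 d ≤ (a + b) * o := by
  have key : cherryPD a b o d - cherryPD a b 0 d = (a + b) * o - a * o * d := by
    unfold cherryPD; ring
  linarith [mul_nonneg (mul_nonneg ha ho) hd]

theorem cherryPD_zero_left : cherryPD a b 0 d = (a + b) * d := by
  unfold cherryPD; ring

end Cherry

theorem two_zpow_neg_le_one (t : ℕ) : (2 : ℚ) ^ (-(t : ℤ)) ≤ 1 :=
  zpow_le_one_of_nonpos₀ one_le_two (by omega)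

theorem one_sub_two_zpow_neg_le_one (t : ℕ) : 1 - (2 : ℚ) ^ (-(t : ℤ)) ≤ 1 :=
  sub_le_self 1 (by positivity)

section Gadget

variable {n : ℕ} (t : ℕ) (lam : Fin n → ℕ) (lamMax lamv : ℕ) (w : Fin n → ℚ)

/-- Expected PD contributed by the edges below `v` that lead to the taxon `x_k` (and to its
dummy sibling `x_k*` when `k ∈ X₂`), given their survival probabilities `o` and `d`. -/
def leafPD (k : Fin n) (o d : ℚ) : ℚ :=
  if lam k = lamMax then ((2 : ℚ) ^ t - 1) * lamMax * o
  else cherryPD (2 ^ t * ((lamMax : ℚ) - lam k)) (2 ^ t * (lam k : ℚ) - lamMax) o d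

def leavesPD (SO SD : Finset (Fin n)) : ℚ :=
  ∑ k, leafPD t lam lamMax k (if k ∈ SO then w k else 0)
    (if k ∈ SD then 1 - (2 : ℚ) ^ (-(t : ℤ)) else 0)

/-- The probability that the root edge `(r, v)` is lost, i.e. that no selected taxon survives. -/
def allExtinctProb (SO SD : Finset (Fin n)) : ℚ :=
  (∏ i ∈ SO, (1 - w i)) * ∏ _i ∈ SD, (2 : ℚ) ^ (-(t : ℤ))

theorem gadgetPD_eq (SO SD : Finset (Fin n)) :
    gadgetPD n t lam lamMax lamv w SO SD =
      lamv * 2 ^ (t * (gadgetX2 n lam lamMax).card) * ((2 : ℚ) ^ t - 1) *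
          (1 - allExtinctProb t w SO SD) + leavesPD t lam lamMax w SO SD := by
  rw [leavesPD, gadgetPD, add_assoc]
  unfold leafPD
  rw [Finset.sum_ite]
  rfl

variable {t lam lamMax lamv w}

section Leaf

variable {k : Fin n} {o d d' : ℚ}

theorem leafPD_le_leafPD_right (hk : lam k ≤ lamMax) (hk' : (lamMax : ℚ) ≤ 2 ^ t * lam k)
    (ho : o ≤ 1) (hd : d ≤ d') : leafPD t lam lamMax k o d ≤ leafPD t lam lamMax k o d' := by
  unfold leafPD
  split_ifs
  · exact le_rfl
  · have : (lam k : ℚ) ≤ lamMax := by exact_mod_cast hk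
    exact cherryPD_le_cherryPD_right (mul_nonneg (by positivity) (sub_nonneg.2 this))
      (sub_nonneg.2 hk') ho hd

/-- The ultrametric identity `(2^t (lamMax - λ_k)) + (2^t λ_k - lamMax) = (2^t - 1) lamMax`
makes the bound uniform in `k`. -/
theorem leafPD_sub_leafPD_zero_le (hk : lam k ≤ lamMax) (ho : 0 ≤ o) (hd : 0 ≤ d) :
    leafPD t lam lamMax k o d - leafPD t lam lamMax k 0 d ≤ ((2 : ℚ) ^ t - 1) * lamMax * o := by
  unfold leafPD
  split_ifs
  · linarith
  · have : (lam k : ℚ) ≤ lamMax := by exact_mod_cast hk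
    have h := cherryPD_sub_cherryPD_zero_le (a := 2 ^ t * ((lamMax : ℚ) - lam k))
      (b := 2 ^ t * (lam k : ℚ) - lamMax) (mul_nonneg (by positivity) (sub_nonneg.2 this)) ho hd
    linarith

theorem leafPD_zero_left (hk : lam k ≠ lamMax) :
    leafPD t lam lamMax k 0 d = ((2 : ℚ) ^ t - 1) * lamMax * d := by
  rw [leafPD, if_neg hk, cherryPD_zero_left]
  ring

end Leaf

theorem leavesPD_mono_right (hmax : ∀ k, lam k ≤ lamMax)
    (hbig : ∀ k, (lamMax : ℚ) ≤ 2 ^ t * lam k) (hw : ∀ k, w k ≤ 1)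
    {SO SD SD' : Finset (Fin n)} (h : SD ⊆ SD') :
    leavesPD t lam lamMax w SO SD ≤ leavesPD t lam lamMax w SO SD' := by
  refine Finset.sum_le_sum fun k _ => leafPD_le_leafPD_right (hmax k) (hbig k) ?_ ?_
  · split_ifs <;> linarith [hw k]
  · have := two_zpow_neg_le_one t
    split_ifs with h₁ h₂ <;> first | exact absurd (h h₁) h₂ | linarith

theorem leavesPD_sub_leavesPD_erase_le (hmax : ∀ k, lam k ≤ lamMax) (hw : ∀ k, 0 ≤ w k)
    {SO : Finset (Fin n)} {j : Fin n} (hj : j ∈ SO) (SD : Finset (Fin n)) :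
    leavesPD t lam lamMax w SO SD - leavesPD t lam lamMax w (SO.erase j) SD ≤
      ((2 : ℚ) ^ t - 1) * lamMax * w j := by
  rw [leavesPD, leavesPD, ← Finset.sum_sub_distrib]
  calc _ ≤ ∑ k, if k = j then ((2 : ℚ) ^ t - 1) * lamMax * w j else 0 := by
        refine Finset.sum_le_sum fun k _ => ?_
        by_cases hkj : k = j
        · subst hkj
          rw [if_pos hj, if_neg (Finset.notMem_erase k SO), if_pos rfl]
          refine leafPD_sub_leafPD_zero_le (hmax k) (hw k) ?_
          have := two_zpow_neg_le_one t
          split_ifs <;> linarith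
        · simp [Finset.mem_erase, hkj]
    _ = _ := by simp

theorem leavesPD_insert {i : Fin n} (hi : lam i ≠ lamMax) {SO SD : Finset (Fin n)}
    (hiSO : i ∉ SO) (hiSD : i ∉ SD) :
    leavesPD t lam lamMax w SO (insert i SD) =
      leavesPD t lam lamMax w SO SD + ((2 : ℚ) ^ t - 1) * lamMax * (1 - 2 ^ (-(t : ℤ))) := by
  rw [leavesPD, leavesPD, ← sub_eq_iff_eq_add', ← Finset.sum_sub_distrib,
    Finset.sum_eq_single_of_mem i (Finset.mem_univ i)]
  · simp [hiSO, hiSD, leafPD_zero_left hi]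
  · intro k _ hki
    simp [Finset.mem_insert, hki]

theorem allExtinctProb_anti_right (hw : ∀ k, w k ≤ 1) (SO : Finset (Fin n))
    {SD SD' : Finset (Fin n)} (h : SD ⊆ SD') :
    allExtinctProb t w SO SD' ≤ allExtinctProb t w SO SD := by
  unfold allExtinctProb
  rw [Finset.prod_const, Finset.prod_const]
  exact mul_le_mul_of_nonneg_left
    (pow_le_pow_of_le_one (by positivity) (two_zpow_neg_le_one t) (Finset.card_le_card h))
    (Finset.prod_nonneg fun k _ => sub_nonneg.2 (hw k))

theorem allExtinctProb_erase_insert_le (hw : ∀ k, w k ≤ 1) {SO SD : Finset (Fin n)}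
    {i j : Fin n} (hj : j ∈ SO) (hwj : w j ≤ 1 - 2 ^ (-(t : ℤ))) (hiSD : i ∉ SD) :
    allExtinctProb t w (SO.erase j) (insert i SD) ≤ allExtinctProb t w SO SD := by
  unfold allExtinctProb
  rw [Finset.prod_insert hiSD, ← Finset.mul_prod_erase SO _ hj]
  have hrest : 0 ≤ (∏ k ∈ SO.erase j, (1 - w k)) * ∏ _k ∈ SD, (2 : ℚ) ^ (-(t : ℤ)) :=
    mul_nonneg (Finset.prod_nonneg fun k _ => sub_nonneg.2 (hw k)) (by positivity)
  nlinarith [mul_le_mul_of_nonneg_left (by linarith : (2 : ℚ) ^ (-(t : ℤ)) ≤ 1 - w j) hrest]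

theorem gadgetPD_mono_right (hmax : ∀ k, lam k ≤ lamMax)
    (hbig : ∀ k, (lamMax : ℚ) ≤ 2 ^ t * lam k) (hw : ∀ k, w k ≤ 1) (SO : Finset (Fin n))
    {SD SD' : Finset (Fin n)} (h : SD ⊆ SD') :
    gadgetPD n t lam lamMax lamv w SO SD ≤ gadgetPD n t lam lamMax lamv w SO SD' := by
  rw [gadgetPD_eq, gadgetPD_eq]
  have h2t : (1 : ℚ) ≤ 2 ^ t := one_le_pow₀ one_le_two
  have hR : (0 : ℚ) ≤ lamv * 2 ^ (t * (gadgetX2 n lam lamMax).card) * (2 ^ t - 1) := by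
    have := sub_nonneg.2 h2t
    positivity
  exact add_le_add (mul_le_mul_of_nonneg_left (sub_le_sub_left
    (allExtinctProb_anti_right hw SO h) 1) hR) (leavesPD_mono_right hmax hbig hw h)

theorem gadgetPD_le_erase_insert (hmax : ∀ k, lam k ≤ lamMax)
    (hw : ∀ k, 0 ≤ w k ∧ w k ≤ 1 - 2 ^ (-(t : ℤ))) {SO SD : Finset (Fin n)} {i j : Fin n}
    (hi : i ∈ gadgetX2 n lam lamMax) (hiSD : i ∉ SD) (hj : j ∈ SO) (hiSO : i ∉ SO.erase j) :
    gadgetPD n t lam lamMax lamv w SO SD ≤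
      gadgetPD n t lam lamMax lamv w (SO.erase j) (insert i SD) := by
  rw [gadgetPD_eq, gadgetPD_eq]
  have hw1 : ∀ k, w k ≤ 1 := fun k => (hw k).2.trans (one_sub_two_zpow_neg_le_one t)
  have h2t : (1 : ℚ) ≤ 2 ^ t := one_le_pow₀ one_le_two
  have hroot : lamv * 2 ^ (t * (gadgetX2 n lam lamMax).card) * ((2 : ℚ) ^ t - 1) *
        (1 - allExtinctProb t w SO SD) ≤
      lamv * 2 ^ (t * (gadgetX2 n lam lamMax).card) * ((2 : ℚ) ^ t - 1) *
        (1 - allExtinctProb t w (SO.erase j) (insert i SD)) := by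
    have := sub_nonneg.2 h2t
    gcongr
    exact allExtinctProb_erase_insert_le hw1 hj (hw j).2 hiSD
  have hloss := leavesPD_sub_leavesPD_erase_le (t := t) hmax (fun k => (hw k).1) hj SD
  have hgain := leavesPD_insert (t := t) (w := w) (Finset.mem_filter.1 hi).2 hiSO hiSD
  have hwj : ((2 : ℚ) ^ t - 1) * lamMax * w j ≤
      ((2 : ℚ) ^ t - 1) * lamMax * (1 - 2 ^ (-(t : ℤ))) :=
    mul_le_mul_of_nonneg_left (hw j).2 (by have := h2t; positivity)
  linarith

end Gadget

theorem exists_card_le_of_exchange {ι β : Type*} [DecidableEq ι] [Preorder β]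
    (f : Finset ι → Finset ι → β) (X : Finset ι) (B : ℕ)
    (insert_le : ∀ SO SD i, i ∈ X → i ∉ SD → f SO SD ≤ f SO (insert i SD))
    (exchange_le : ∀ SO SD i j, i ∈ X → i ∉ SD → j ∈ SO → i ∉ SO.erase j →
      f SO SD ≤ f (SO.erase j) (insert i SD))
    {SO SD : Finset ι} (hSD : SD ⊆ X) (hcard : SO.card + SD.card ≤ B + X.card) :
    ∃ SO' : Finset ι, SO'.card ≤ B ∧ f SO SD ≤ f SO' X := by
  induction hk : (X \ SD).card generalizing SO SD with
  | zero =>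
    obtain rfl : SD = X := Finset.Subset.antisymm hSD (Finset.sdiff_eq_empty_iff_subset.1
      (Finset.card_eq_zero.1 hk))
    exact ⟨SO, by omega, le_rfl⟩
  | succ k ih =>
    obtain ⟨i, hi⟩ : (X \ SD).Nonempty := Finset.card_pos.1 (by omega)
    obtain ⟨hiX, hiSD⟩ := Finset.mem_sdiff.1 hi
    have hsub : insert i SD ⊆ X := Finset.insert_subset hiX hSD
    have hk' : (X \ insert i SD).card = k := by
      rw [Finset.sdiff_insert, Finset.card_erase_of_mem hi, hk, Nat.add_sub_cancel]
    have hcard' := Finset.card_insert_of_notMem hiSD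
    by_cases hslack : SO.card + SD.card < B + X.card
    · obtain ⟨SO', hB, hle⟩ := ih (SO := SO) (SD := insert i SD) hsub (by omega) hk'
      exact ⟨SO', hB, (insert_le SO SD i hiX hiSD).trans hle⟩
    · have hSDX : SD.card < X.card := Finset.card_lt_card ⟨hSD, fun h => hiSD (h hiX)⟩
      obtain ⟨j, hj, hij⟩ : ∃ j ∈ SO, i ∉ SO.erase j := by
        by_cases hiSO : i ∈ SO
        · exact ⟨i, hiSO, Finset.notMem_erase i SO⟩
        · obtain ⟨j, hj⟩ := Finset.card_pos.1 (by omega : 0 < SO.card)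
          exact ⟨j, hj, fun h => hiSO (Finset.mem_of_mem_erase h)⟩
      obtain ⟨SO', hB, hle⟩ :=
        ih (SO := SO.erase j) (SD := insert i SD) hsub (by rw [card_erase_of_mem hj]; omega) hk'
      exact ⟨SO', hB, (exchange_le SO SD i j hiX hiSD hj hij).trans hle⟩

theorem stmt_19_general (n t B : ℕ) (lam : Fin n → ℕ) (lamMax lamv : ℕ)
    (hmax : ∀ i, lam i ≤ lamMax)
    (hbig : ∀ i, (lamMax : ℚ) < 2 ^ t * (lam i : ℚ))
    (w : Fin n → ℚ) (hw : ∀ i, 0 ≤ w i ∧ w i < 1 - (2 : ℚ) ^ (-(t : ℤ)))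
    (D' : ℚ)
    (hsol : ∃ SO SD : Finset (Fin n), SD ⊆ gadgetX2 n lam lamMax ∧
      SO.card + SD.card ≤ B + (gadgetX2 n lam lamMax).card ∧
      D' ≤ gadgetPD n t lam lamMax lamv w SO SD) :
    ∃ SO : Finset (Fin n), SO.card ≤ B ∧
      D' ≤ gadgetPD n t lam lamMax lamv w SO (gadgetX2 n lam lamMax) := by
  obtain ⟨SO, SD, hSD, hcard, hD⟩ := hsol
  have hw' : ∀ k, 0 ≤ w k ∧ w k ≤ 1 - (2 : ℚ) ^ (-(t : ℤ)) :=
    fun k => ⟨(hw k).1, (hw k).2.le⟩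
  have hw1 : ∀ k, w k ≤ 1 := fun k => (hw' k).2.trans (one_sub_two_zpow_neg_le_one t)
  obtain ⟨SO', hB, hle⟩ := exists_card_le_of_exchange (gadgetPD n t lam lamMax lamv w)
    (gadgetX2 n lam lamMax) B
    (fun SO SD i _ _ =>
      gadgetPD_mono_right hmax (fun k => (hbig k).le) hw1 SO (subset_insert i SD))
    (fun _ _ _ _ hi hiSD hj hij => gadgetPD_le_erase_insert hmax hw' hi hiSD hj hij) hSD hcard
  exact ⟨SO', hB, hD.trans hle⟩

/-- In the ultrametric reduction, every dummy leaf has survival probability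
`1 - 2^{-t}` strictly exceeding every original survival probability, every project
has cost `1`, and the budget is `B + |X*|`. If the constructed instance has a
solution (a selection of original taxa `SO` and dummies `SD ⊆ X₂` with
`|SO| + |SD| ≤ B + |X₂|` and PD at least `D'`), then — by swapping `x_i` for `x_i*`,
taking all of `X*`, or swapping some selected `x_j` for `x_i*` — it has a solution
containing all dummy leaves `X* = X₂`. -/
theorem stmt_19 (n t B : ℕ) (ht : 1 ≤ t) (lam : Fin n → ℕ) (lamMax lamv : ℕ)
    (hmax : ∀ i, lam i ≤ lamMax)
    (hbig : ∀ i, (lamMax : ℚ) < 2 ^ t * (lam i : ℚ))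
    (w : Fin n → ℚ) (hw : ∀ i, 0 ≤ w i ∧ w i < 1 - (2 : ℚ) ^ (-(t : ℤ)))
    (D' : ℚ)
    (hsol : ∃ SO SD : Finset (Fin n), SD ⊆ gadgetX2 n lam lamMax ∧
      SO.card + SD.card ≤ B + (gadgetX2 n lam lamMax).card ∧
      D' ≤ gadgetPD n t lam lamMax lamv w SO SD) :
    ∃ SO : Finset (Fin n), SO.card ≤ B ∧
      D' ≤ gadgetPD n t lam lamMax lamv w SO (gadgetX2 n lam lamMax) :=
  stmt_19_general n t B lam lamMax lamv hmax hbig w hw D' hsol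
end
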